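/- arXiv:2304.12690 — 2 statements merged into one kernel-verified Lean document; each statement's English description precedes it below -/
import Mathlib

section
/- Let Λ = diag(√λ_1,…,√λ_r) with each λ_i > 0, and let A, B be r×r complex matrices such that A, I−A, B, I−B are all positive semidefinite. If tr(Λ A Λ(I−B)) = 0 and tr(Λ(I−A)Λ B) = 0, then B = A, A is idempotent (A² = A), and A_{ij} = 0 whenever λ_i ≠ λ_j. -/
/-!
Both traces are traces of products of two positive semidefinite matrices, `(Λ A Λ)(I - B)` and
`(Λ (I - A) Λ) B`, so both products vanish. Subtracting them gives `Λ² B = Λ A Λ`, i.e.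
`Λ B = A Λ`, and taking adjoints `B Λ = Λ A`. Hence `A` commutes with `Λ² = diag(λ)`, which
forces `A i j = 0` whenever `λ i ≠ λ j`; such an `A` also commutes with `Λ = diag(√λ)`. Then
`Λ B = A Λ = Λ A` gives `B = A`, and `Λ A Λ (I - A) = Λ A (I - A) Λ = 0` gives `A² = A`.
-/

open Matrix
open scoped ComplexOrder

section Ring

variable {R : Type*} [Ring R] {l a b : R}

lemma mul_eq_mul_of_conj_mul_eq_zero (hl : IsUnit l) (h₁ : l * a * l * (1 - b) = 0)
    (h₂ : l * (1 - a) * l * b = 0) : l * b = a * l :=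
  hl.mul_left_cancel (by linear_combination (norm := noncomm_ring) h₂ - h₁)

lemma isIdempotentElem_of_conj_mul_eq_zero (hl : IsUnit l) (hc : Commute a l)
    (h : l * a * l * (1 - a) = 0) : IsIdempotentElem a := by
  have hconj : l * (a * a) * l = l * a * l := by
    linear_combination (norm := noncomm_ring) -h + l * a * hc.eq
  exact hl.mul_left_cancel (hl.mul_right_cancel hconj)

end Ring

lemma commute_mul_self_of_mul_eq_mul {R : Type*} [Ring R] [StarRing R] {l a b : R}
    (hl : IsSelfAdjoint l) (ha : IsSelfAdjoint a) (hb : IsSelfAdjoint b) (h : l * b = a * l) :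
    Commute a (l * l) := by
  have h' : b * l = l * a := by
    simpa only [star_mul, hl.star_eq, ha.star_eq, hb.star_eq] using congrArg star h
  rw [commute_iff_eq, ← mul_assoc, ← h, mul_assoc, h', mul_assoc]

namespace Matrix

variable {n : Type*} [Fintype n]

/-- Writing `X = Cᴴ C` and `Y = Dᴴ D`, the trace of `X Y` is the trace of `(D Cᴴ)ᴴ (D Cᴴ)`. -/
lemma PosSemidef.mul_eq_zero_of_trace_mul_eq_zero {𝕜 : Type*} [RCLike 𝕜] {X Y : Matrix n n 𝕜}
    (hX : X.PosSemidef) (hY : Y.PosSemidef) (h : (X * Y).trace = 0) : X * Y = 0 := by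
  classical
  open scoped MatrixOrder in
  obtain ⟨C, rfl⟩ := CStarAlgebra.nonneg_iff_eq_star_mul_self.mp hX.nonneg
  open scoped MatrixOrder in
  obtain ⟨D, rfl⟩ := CStarAlgebra.nonneg_iff_eq_star_mul_self.mp hY.nonneg
  simp only [star_eq_conjTranspose] at h ⊢
  have hDC : D * Cᴴ = 0 := by
    rw [← trace_conjTranspose_mul_self_eq_zero_iff, ← h, conjTranspose_mul,
      conjTranspose_conjTranspose, ← Matrix.mul_assoc, trace_mul_cycle]
    simp only [Matrix.mul_assoc]
  calc Cᴴ * C * (Dᴴ * D) = Cᴴ * (D * Cᴴ)ᴴ * D := by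
        simp only [conjTranspose_mul, conjTranspose_conjTranspose, Matrix.mul_assoc]
    _ = 0 := by rw [hDC, conjTranspose_zero, Matrix.mul_zero, Matrix.zero_mul]

lemma PosSemidef.conj_mul_eq_zero_of_trace_eq_zero {𝕜 : Type*} [RCLike 𝕜]
    {Λ X Y : Matrix n n 𝕜} (hΛ : Λ.IsHermitian) (hX : X.PosSemidef) (hY : Y.PosSemidef)
    (h : (Λ * X * Λ * Y).trace = 0) : Λ * X * Λ * Y = 0 := by
  have hΛXΛ : (Λ * X * Λ).PosSemidef := by
    simpa only [hΛ.eq] using hX.mul_mul_conjTranspose_same Λ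
  exact hΛXΛ.mul_eq_zero_of_trace_mul_eq_zero hY h

lemma commute_diagonal_iff {α : Type*} [DecidableEq n] [CommRing α] [NoZeroDivisors α]
    {M : Matrix n n α} {d : n → α} :
    Commute M (diagonal d) ↔ ∀ i j, d i ≠ d j → M i j = 0 := by
  simp only [commute_iff_eq, ← ext_iff, mul_diagonal, diagonal_mul]
  refine forall₂_congr fun i j => ?_
  rw [mul_comm (M i j), ← sub_eq_zero, ← sub_mul, mul_eq_zero, sub_eq_zero, eq_comm (a := d j),
    or_iff_not_imp_left]

end Matrix

/-- Structural lemma in the NP-hardness proof: if `A, I−A, B, I−B` are PSD and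
`tr(Λ A Λ (I−B)) = tr(Λ (I−A) Λ B) = 0` for `Λ = diagonal (√λ₁, …, √λᵣ)` with `λᵢ > 0`,
then `B = A`, `A` is idempotent, and `A i j = 0` whenever `λᵢ ≠ λⱼ`. -/
theorem vanishing_traces_force_projector_structure
    (r : ℕ) (l : Fin r → ℝ) (hl : ∀ i, 0 < l i)
    (Λ : Matrix (Fin r) (Fin r) ℂ)
    (hΛ : Λ = Matrix.diagonal (fun i => (Real.sqrt (l i) : ℂ)))
    (A B : Matrix (Fin r) (Fin r) ℂ)
    (hA : A.PosSemidef) (hA' : (1 - A).PosSemidef)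
    (hB : B.PosSemidef) (hB' : (1 - B).PosSemidef)
    (h1 : (Λ * A * Λ * (1 - B)).trace = 0)
    (h2 : (Λ * (1 - A) * Λ * B).trace = 0) :
    B = A ∧ A * A = A ∧ ∀ i j, l i ≠ l j → A i j = 0 := by
  have hΛH : Λ.IsHermitian := by
    subst hΛ
    exact isHermitian_diagonal_of_self_adjoint _ (funext fun i => Complex.conj_ofReal _)
  have hΛu : IsUnit Λ := by
    subst hΛ
    exact isUnit_diagonal.mpr (Pi.isUnit_iff.mpr fun i =>
      (Complex.ofReal_ne_zero.mpr (Real.sqrt_pos.mpr (hl i)).ne').isUnit)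
  have hΛsq : Λ * Λ = diagonal (fun i => (l i : ℂ)) := by
    subst hΛ
    simp only [diagonal_mul_diagonal, ← Complex.ofReal_mul, Real.mul_self_sqrt (hl _).le]
  have e1 := hA.conj_mul_eq_zero_of_trace_eq_zero hΛH hB' h1
  have e2 := hA'.conj_mul_eq_zero_of_trace_eq_zero hΛH hB h2
  have hΛB : Λ * B = A * Λ := mul_eq_mul_of_conj_mul_eq_zero hΛu e1 e2
  have hblock : ∀ i j, l i ≠ l j → A i j = 0 := by
    have hcomm_sq := commute_mul_self_of_mul_eq_mul hΛH.isSelfAdjoint hA.isHermitian.isSelfAdjoint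
      hB.isHermitian.isSelfAdjoint hΛB
    rw [hΛsq, commute_diagonal_iff] at hcomm_sq
    exact fun i j hij => hcomm_sq i j (by exact_mod_cast hij)
  have hcomm : Commute A Λ := by
    rw [hΛ, commute_diagonal_iff]
    exact fun i j hij => hblock i j fun h => hij (by rw [h])
  have hBA : B = A := hΛu.mul_left_cancel (hΛB.trans hcomm.eq)
  rw [hBA] at e1
  exact ⟨hBA, isIdempotentElem_of_conj_mul_eq_zero hΛu hcomm e1, hblock⟩
end

section
/- Let P be an n×m matrix with nonnegative real entries summing to 1 whose row sums P(x) = ∑_j P(x,j) are all strictly positive, let λ_1,…,λ_r be positive reals, and suppose P admits a diagonal form of PSD factorization with respect to Λ = diag(√λ_1,…,√λ_r), i.e., there exist r×r positive semidefinite complex matrices C_1,…,C_n and D_1,…,D_m with tr(C_x D_y) = P(x,y) for all x,y and ∑_{x=1}^n C_x = ∑_{y=1}^m D_y = Λ. Define V'_2(P) = ∑_{y=1}^m √( ∑_{x=1}^n P(x)·( P(x,y)/P(x) − P(y) )² ), where P(y) = ∑_i P(i,y). Then ∑_{i=1}^r λ_i² ≤ 1 − V'_2(P)²/r. -/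
/-!
Conjugating by `diag(λᵢ^{1/4})` turns the factorization into PSD matrices `Mₓ`, `N_y` with
`∑ N_y = 1` (a POVM), `∑ Mₓ = ρ := diag(λᵢ)` and `tr(Mₓ N_y) = P(x,y)`. The centred matrices
`Aₓ = Mₓ - P(x) ρ` then satisfy `tr(Aₓ N_y) = P(x,y) - P(x) P(y)`, so Cauchy–Schwarz for the
semi-inner product induced by `N_y`, followed by Cauchy–Schwarz over `y`, gives
`V'₂(P)² ≤ r · tr K` with `K = ∑ₓ Aₓ² / P(x)`. Finally `tr(Mₓ²) ≤ (tr Mₓ)² = P(x)²` yields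
`tr K ≤ 1 - tr ρ² = 1 - ∑ λᵢ²`.
-/

open Matrix
open scoped ComplexOrder

namespace Matrix

variable {𝕜 n ι κ : Type*} [RCLike 𝕜] [Fintype n] [Fintype ι] [Fintype κ]

theorem trace_conj_mul_conj_of_mul_eq_one [DecidableEq n] {R : Type*} [CommRing R] [StarRing R]
    {S T : Matrix n n R} (h : S * T = 1) (C D : Matrix n n R) :
    (Sᴴ * C * S * (T * D * Tᴴ)).trace = (C * D).trace := by
  have hST : Sᴴ * C * S * (T * D * Tᴴ) = Sᴴ * (C * D * Tᴴ) := by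
    simp only [Matrix.mul_assoc]
    rw [← Matrix.mul_assoc S T, h, Matrix.one_mul]
  rw [hST, trace_mul_comm, Matrix.mul_assoc, ← conjTranspose_mul, h, conjTranspose_one,
    Matrix.mul_one]

theorem exists_mul_eq_one_and_conj_diagonal [DecidableEq n] {d : n → ℝ} (hd : ∀ i, 0 < d i) :
    ∃ S T : Matrix n n 𝕜, S * T = 1 ∧ T * diagonal (fun i => (d i : 𝕜)) * Tᴴ = 1 ∧
      Sᴴ * diagonal (fun i => (d i : 𝕜)) * S = diagonal (fun i => ((d i ^ 2 : ℝ) : 𝕜)) := by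
  have hs : ∀ i, (√(d i) : 𝕜) ≠ 0 := fun i =>
    RCLike.ofReal_ne_zero.2 (Real.sqrt_pos.2 (hd i)).ne'
  have hsq : ∀ i, (√(d i) : 𝕜) * √(d i) = d i := fun i => by
    rw [← RCLike.ofReal_mul, Real.mul_self_sqrt (hd i).le]
  refine ⟨diagonal fun i => (√(d i) : 𝕜), diagonal fun i => (√(d i) : 𝕜)⁻¹, ?_, ?_, ?_⟩ <;>
    simp only [diagonal_conjTranspose, diagonal_mul_diagonal, ← diagonal_one] <;>
    congr 1 <;> funext i
  · exact mul_inv_cancel₀ (hs i)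
  · simp only [Pi.star_apply, RCLike.star_def, map_inv₀, RCLike.conj_ofReal]
    rw [← hsq]
    field_simp [hs i]
  · simp only [Pi.star_apply, RCLike.star_def, RCLike.conj_ofReal]
    rw [RCLike.ofReal_pow, ← hsq]
    ring

theorem PosSemidef.norm_trace_mul_sq_le {M : Matrix n n 𝕜} (hM : M.PosSemidef)
    (X : Matrix n n 𝕜) :
    ‖(X * M).trace‖ ^ 2 ≤ RCLike.re M.trace * RCLike.re (X * M * Xᴴ).trace := by
  classical
  -- Cauchy–Schwarz for `⟪X, Y⟫ = tr (Y * M * Xᴴ)`, applied to `1` and `X`.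
  let := M.toMatrixSeminormedAddCommGroup hM
  let := M.toMatrixInnerProductSpace hM
  have h := inner_mul_inner_self_le (𝕜 := 𝕜) (1 : Matrix n n 𝕜) X
  change ‖(X * M * 1ᴴ).trace‖ * ‖(1 * M * Xᴴ).trace‖ ≤
    RCLike.re (1 * M * 1ᴴ).trace * RCLike.re (X * M * Xᴴ).trace at h
  have hadj : (M * Xᴴ).trace = star (X * M).trace := by
    rw [← trace_conjTranspose, conjTranspose_mul, hM.isHermitian.eq]
  rwa [conjTranspose_one, mul_one, one_mul, mul_one, hadj, norm_star, ← sq] at h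

theorem PosSemidef.re_trace_mul_self_le_sq {M : Matrix n n 𝕜} (hM : M.PosSemidef) :
    RCLike.re (M * M).trace ≤ RCLike.re M.trace ^ 2 := by
  classical
  have hsq : (M * M).trace = ∑ i, ((hM.isHermitian.eigenvalues i ^ 2 : ℝ) : 𝕜) := by
    conv_lhs =>
      rw [hM.isHermitian.spectral_theorem, ← map_mul, Unitary.conjStarAlgAut_apply,
        trace_mul_cycle, Unitary.coe_star_mul_self, one_mul, diagonal_mul_diagonal,
        trace_diagonal]
    simp [sq]
  rw [hsq, hM.isHermitian.trace_eq_sum_eigenvalues]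
  simp only [map_sum, RCLike.ofReal_re]
  exact Finset.sum_sq_le_sq_sum_of_nonneg fun i _ => hM.eigenvalues_nonneg i

theorem PosSemidef.trace_mul_nonneg {A B : Matrix n n 𝕜} (hA : A.PosSemidef)
    (hB : B.PosSemidef) : 0 ≤ (A * B).trace := by
  classical
  open scoped MatrixOrder in
  obtain ⟨S, rfl⟩ := CStarAlgebra.nonneg_iff_eq_star_mul_self.mp hA.nonneg
  rw [star_eq_conjTranspose, Matrix.mul_assoc, trace_mul_comm]
  exact (hB.mul_mul_conjTranspose_same S).trace_nonneg

theorem PosSemidef.sum_re_trace_mul_sq_div_le {N : Matrix n n 𝕜} (hN : N.PosSemidef)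
    {A : ι → Matrix n n 𝕜} (hA : ∀ x, (A x).IsHermitian) {p : ι → ℝ} (hp : ∀ x, 0 < p x) :
    ∑ x, RCLike.re (A x * N).trace ^ 2 / p x ≤
      RCLike.re N.trace * RCLike.re (N * ∑ x, (p x)⁻¹ • (A x * A x)).trace := by
  have hterm : ∀ x, RCLike.re (A x * N).trace ^ 2 ≤
      RCLike.re N.trace * RCLike.re (N * (A x * A x)).trace := by
    intro x
    have hcs := hN.norm_trace_mul_sq_le (A x)
    rw [(hA x).eq, trace_mul_cycle, trace_mul_comm (A x * A x)] at hcs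
    exact (sq_le_sq.mpr ((RCLike.abs_re_le_norm _).trans (le_abs_self _))).trans hcs
  rw [Finset.mul_sum, trace_sum, map_sum, Finset.mul_sum]
  refine Finset.sum_le_sum fun x _ => ?_
  rw [Matrix.mul_smul, trace_smul, RCLike.smul_re, mul_left_comm, div_eq_inv_mul]
  exact mul_le_mul_of_nonneg_left (hterm x) (inv_nonneg.2 (hp x).le)

theorem sq_sum_sqrt_sum_re_trace_mul_sq_div_div_card_le [DecidableEq n]
    {N : κ → Matrix n n 𝕜} (hN : ∀ y, (N y).PosSemidef) (hN1 : ∑ y, N y = 1)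
    {A : ι → Matrix n n 𝕜} (hA : ∀ x, (A x).IsHermitian) {p : ι → ℝ} (hp : ∀ x, 0 < p x) :
    (∑ y, √(∑ x, RCLike.re (A x * N y).trace ^ 2 / p x)) ^ 2 / Fintype.card n ≤
      RCLike.re (∑ x, (p x)⁻¹ • (A x * A x)).trace := by
  set K := ∑ x, (p x)⁻¹ • (A x * A x)
  have hK : K.PosSemidef := posSemidef_sum _ fun x _ =>
    ((hA x).eq ▸ posSemidef_conjTranspose_mul_self (A x)).smul (inv_nonneg.2 (hp x).le)
  have htrN : ∀ y, 0 ≤ RCLike.re (N y).trace := fun y =>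
    (RCLike.nonneg_iff.mp (hN y).trace_nonneg).1
  have htrNK : ∀ y, 0 ≤ RCLike.re (N y * K).trace := fun y =>
    (RCLike.nonneg_iff.mp ((hN y).trace_mul_nonneg hK)).1
  have hsumN : ∑ y, RCLike.re (N y).trace = Fintype.card n := by
    rw [← map_sum, ← trace_sum, hN1, trace_one]
    simp
  have hsumNK : ∑ y, RCLike.re (N y * K).trace = RCLike.re K.trace := by
    rw [← map_sum, ← trace_sum, ← Finset.sum_mul, hN1, Matrix.one_mul]
  refine div_le_of_le_mul₀ (Nat.cast_nonneg _) (RCLike.nonneg_iff.mp hK.trace_nonneg).1 ?_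
  calc (∑ y, √(∑ x, RCLike.re (A x * N y).trace ^ 2 / p x)) ^ 2
      ≤ (∑ y, √(RCLike.re (N y).trace) * √(RCLike.re (N y * K).trace)) ^ 2 := by
        gcongr with y
        rw [← Real.sqrt_mul (htrN y)]
        exact Real.sqrt_le_sqrt ((hN y).sum_re_trace_mul_sq_div_le hA hp)
    _ ≤ (√(∑ y, RCLike.re (N y).trace) * √(∑ y, RCLike.re (N y * K).trace)) ^ 2 := by
        gcongr
        exact Real.sum_sqrt_mul_sqrt_le _ htrN htrNK
    _ = RCLike.re K.trace * Fintype.card n := by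
        rw [mul_pow, Real.sq_sqrt (Finset.sum_nonneg fun y _ => htrN y),
          Real.sq_sqrt (Finset.sum_nonneg fun y _ => htrNK y), hsumN, hsumNK, mul_comm]

theorem re_trace_sub_smul_mul_sub_smul (A B : Matrix n n 𝕜) (c : ℝ) :
    RCLike.re ((A - c • B) * (A - c • B)).trace =
      RCLike.re (A * A).trace - 2 * c * RCLike.re (A * B).trace +
        c ^ 2 * RCLike.re (B * B).trace := by
  simp only [Matrix.sub_mul, Matrix.mul_sub, Matrix.smul_mul, Matrix.mul_smul, trace_sub,
    trace_smul, map_sub, RCLike.smul_re, trace_mul_comm B A]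
  ring

theorem re_trace_sum_inv_smul_sub_smul_sq_le {M : ι → Matrix n n 𝕜}
    (hM : ∀ x, (M x).PosSemidef) {p : ι → ℝ} (hp : ∀ x, 0 < p x)
    (htr : ∀ x, (M x).trace = p x) (hp1 : ∑ x, p x = 1) :
    RCLike.re (∑ x, (p x)⁻¹ • ((M x - p x • ∑ x, M x) * (M x - p x • ∑ x, M x))).trace ≤
      1 - RCLike.re ((∑ x, M x) * ∑ x, M x).trace := by
  set ρ := ∑ x, M x
  have hterm : ∀ x, RCLike.re ((p x)⁻¹ • ((M x - p x • ρ) * (M x - p x • ρ))).trace ≤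
      p x - 2 * RCLike.re (M x * ρ).trace + p x * RCLike.re (ρ * ρ).trace := by
    intro x
    have hsq := (hM x).re_trace_mul_self_le_sq
    rw [htr, RCLike.ofReal_re] at hsq
    rw [trace_smul, RCLike.smul_re, re_trace_sub_smul_mul_sub_smul, inv_mul_le_iff₀ (hp x)]
    linarith
  have hcross : ∑ x, RCLike.re (M x * ρ).trace = RCLike.re (ρ * ρ).trace := by
    rw [← map_sum, ← trace_sum, ← Finset.sum_mul]
  calc _ = ∑ x, RCLike.re ((p x)⁻¹ • ((M x - p x • ρ) * (M x - p x • ρ))).trace := by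
        rw [trace_sum, map_sum]
    _ ≤ ∑ x, (p x - 2 * RCLike.re (M x * ρ).trace + p x * RCLike.re (ρ * ρ).trace) :=
        Finset.sum_le_sum fun x _ => hterm x
    _ = 1 - RCLike.re (ρ * ρ).trace := by
        rw [Finset.sum_add_distrib, Finset.sum_sub_distrib, ← Finset.mul_sum, hcross,
          ← Finset.sum_mul, hp1]
        ring

end Matrix

variable {ι κ : Type*} [Fintype ι] [Fintype κ]

noncomputable def V2' (P : Matrix ι κ ℝ) : ℝ :=
  ∑ y, √(∑ x, (∑ j, P x j) * (P x y / (∑ j, P x j) - ∑ i, P i y) ^ 2)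

theorem V2'_sq_div_card_le_one_sub {𝕜 n : Type*} [RCLike 𝕜] [Fintype n] [DecidableEq n]
    {P : Matrix ι κ ℝ} (hPsum : ∑ x, ∑ y, P x y = 1) (hrow : ∀ x, 0 < ∑ y, P x y)
    {M : ι → Matrix n n 𝕜} {N : κ → Matrix n n 𝕜} (hM : ∀ x, (M x).PosSemidef)
    (hN : ∀ y, (N y).PosSemidef) (htr : ∀ x y, (M x * N y).trace = P x y)
    (hN1 : ∑ y, N y = 1) :
    V2' P ^ 2 / Fintype.card n ≤ 1 - RCLike.re ((∑ x, M x) * ∑ x, M x).trace := by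
  set p : ι → ℝ := fun x => ∑ y, P x y
  set ρ := ∑ x, M x
  set A : ι → Matrix n n 𝕜 := fun x => M x - p x • ρ
  have htrM : ∀ x, (M x).trace = p x := fun x => by
    rw [← Matrix.mul_one (M x), ← hN1, Finset.mul_sum, trace_sum]
    simp [p, htr]
  have htrρN : ∀ y, (ρ * N y).trace = ∑ x, P x y := fun y => by
    rw [Finset.sum_mul, trace_sum]
    simp [htr]
  have hA : ∀ x, (A x).IsHermitian := fun x => (hM x).isHermitian.sub
    ((posSemidef_sum _ fun x _ => hM x).isHermitian.smul (IsSelfAdjoint.all _))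
  have hAN : ∀ x y, RCLike.re (A x * N y).trace = P x y - p x * ∑ i, P i y := fun x y => by
    simp only [A, Matrix.sub_mul, Matrix.smul_mul, trace_sub, trace_smul, htr, htrρN, map_sub,
      RCLike.smul_re, RCLike.ofReal_re]
  have hV : V2' P = ∑ y, √(∑ x, RCLike.re (A x * N y).trace ^ 2 / p x) := by
    refine Finset.sum_congr rfl fun y _ => congrArg _ (Finset.sum_congr rfl fun x _ => ?_)
    rw [hAN]
    field_simp [p, (hrow x).ne']
    ring
  rw [hV]
  exact (sq_sum_sqrt_sum_re_trace_mul_sq_div_div_card_le hN hN1 hA hrow).trans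
    (re_trace_sum_inv_smul_sub_smul_sq_le hM hrow htrM hPsum)

theorem sum_squares_schmidt_le_one_sub_V2_squared_div_r_general
    (n m r : ℕ) (P : Matrix (Fin n) (Fin m) ℝ)
    (hPsum : ∑ x, ∑ y, P x y = 1)
    (hrow : ∀ x, 0 < ∑ j, P x j)
    (l : Fin r → ℝ) (hl : ∀ i, 0 < l i)
    (C : Fin n → Matrix (Fin r) (Fin r) ℂ) (D : Fin m → Matrix (Fin r) (Fin r) ℂ)
    (hC : ∀ x, (C x).PosSemidef) (hD : ∀ y, (D y).PosSemidef)
    (htr : ∀ x y, (C x * D y).trace = (P x y : ℂ))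
    (hCsum : (∑ x, C x) = Matrix.diagonal (fun i => (Real.sqrt (l i) : ℂ)))
    (hDsum : (∑ y, D y) = Matrix.diagonal (fun i => (Real.sqrt (l i) : ℂ))) :
    ∑ i, (l i) ^ 2 ≤ 1 -
      (∑ y, Real.sqrt (∑ x, (∑ j, P x j) *
          (P x y / (∑ j, P x j) - ∑ i, P i y) ^ 2)) ^ 2 / (r : ℝ) := by
  obtain ⟨S, T, hST, hT, hS⟩ :=
    exists_mul_eq_one_and_conj_diagonal (𝕜 := ℂ) fun i => Real.sqrt_pos.2 (hl i)
  rw [RCLike.ofReal_eq_complex_ofReal] at hS hT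
  have h := V2'_sq_div_card_le_one_sub hPsum hrow
    (M := fun x => Sᴴ * C x * S) (N := fun y => T * D y * Tᴴ)
    (fun x => (hC x).conjTranspose_mul_mul_same S) (fun y => (hD y).mul_mul_conjTranspose_same T)
    (fun x y => (trace_conj_mul_conj_of_mul_eq_one hST _ _).trans (htr x y))
    (by rw [← Finset.sum_mul, ← Finset.mul_sum, hDsum, hT])
  rw [← Finset.sum_mul, ← Finset.mul_sum, hCsum, hS, Fintype.card_fin] at h
  have hρ : RCLike.re (diagonal (fun i => ((√(l i) ^ 2 : ℝ) : ℂ)) *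
      diagonal (fun i => ((√(l i) ^ 2 : ℝ) : ℂ))).trace = ∑ i, l i ^ 2 := by
    simp [diagonal_mul_diagonal, Real.sq_sqrt (hl _).le, sq]
  rw [hρ] at h
  exact le_sub_comm.mp h

/-- If `P` (a probability matrix with strictly positive row sums) admits a
diagonal form of PSD factorization with respect to `Λ = diagonal (√λ₁, …, √λᵣ)`, then
`∑ᵢ λᵢ² ≤ 1 − V'₂(P)²/r`, where
`V'₂(P) = ∑_y √(∑_x P(x)·(P(x,y)/P(x) − P(y))²)`. -/
theorem sum_squares_schmidt_le_one_sub_V2_squared_div_r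
    (n m r : ℕ) (P : Matrix (Fin n) (Fin m) ℝ)
    (hP : ∀ x y, 0 ≤ P x y) (hPsum : ∑ x, ∑ y, P x y = 1)
    (hrow : ∀ x, 0 < ∑ j, P x j)
    (l : Fin r → ℝ) (hl : ∀ i, 0 < l i)
    (C : Fin n → Matrix (Fin r) (Fin r) ℂ) (D : Fin m → Matrix (Fin r) (Fin r) ℂ)
    (hC : ∀ x, (C x).PosSemidef) (hD : ∀ y, (D y).PosSemidef)
    (htr : ∀ x y, (C x * D y).trace = (P x y : ℂ))
    (hCsum : (∑ x, C x) = Matrix.diagonal (fun i => (Real.sqrt (l i) : ℂ)))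
    (hDsum : (∑ y, D y) = Matrix.diagonal (fun i => (Real.sqrt (l i) : ℂ))) :
    ∑ i, (l i) ^ 2 ≤ 1 -
      (∑ y, Real.sqrt (∑ x, (∑ j, P x j) *
          (P x y / (∑ j, P x j) - ∑ i, P i y) ^ 2)) ^ 2 / (r : ℝ) :=
  sum_squares_schmidt_le_one_sub_V2_squared_div_r_general n m r P hPsum hrow l hl C D hC hD htr
    hCsum hDsum
end
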